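/- arXiv:1508.06053 — 2 statements merged into one kernel-verified Lean document; each statement's English description precedes it below -/
import Mathlib

section
/- (Rund-type divergence identity.) Let Z : Ω × (ℝⁿ \ {0}) → ℝⁿ be a smooth fiber-dependent vector field and let s : Ω → ℝⁿ \ {0} be a smooth section. Then for all x ∈ Ω the divergence of the pulled-back field s*Z with respect to the Levi-Civita connection of the pullback metric satisfies ∂_μ [Z^μ(x,s(x))] + (Γ^{s})^μ_{μν}(x) Z^ν(x,s(x)) = (∇^H·Z)(x,s(x)) + I_β(x,s(x)) Z^μ(x,s(x)) D_μ s^β + (∂Z^μ/∂y^β)(x,s(x)) D_μ s^β. -/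
open scoped ContDiff


noncomputable section

/-- Partial derivative `∂f/∂x^μ` of a function on the base `ℝⁿ`. -/
def pd {n : ℕ} (f : (Fin n → ℝ) → ℝ) (μ : Fin n) (x : Fin n → ℝ) : ℝ :=
  fderiv ℝ f x (Pi.single μ 1)

/-- Partial derivative in the base (`x`) variable of a fiber-dependent function. -/
def pdx {n : ℕ} (f : (Fin n → ℝ) → (Fin n → ℝ) → ℝ) (μ : Fin n) (x y : Fin n → ℝ) : ℝ :=
  fderiv ℝ (fun x' => f x' y) x (Pi.single μ 1)

/-- Partial derivative in the fiber (`y`) variable of a fiber-dependent function. -/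
def pdy {n : ℕ} (f : (Fin n → ℝ) → (Fin n → ℝ) → ℝ) (μ : Fin n) (x y : Fin n → ℝ) : ℝ :=
  fderiv ℝ (f x) y (Pi.single μ 1)

/-- The Finsler metric `g_{μν}(x,y) = ∂²L/∂y^μ∂y^ν`. -/
def gmet {n : ℕ} (L : (Fin n → ℝ) → (Fin n → ℝ) → ℝ) (μ ν : Fin n) :
    (Fin n → ℝ) → (Fin n → ℝ) → ℝ :=
  pdy (pdy L ν) μ

/-- The Cartan torsion `C_{αβγ} = (1/2) ∂g_{βγ}/∂y^α`. -/
def cartan {n : ℕ} (L : (Fin n → ℝ) → (Fin n → ℝ) → ℝ) (α β γ : Fin n)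
    (x y : Fin n → ℝ) : ℝ :=
  (1 / 2) * pdy (gmet L β γ) α x y

/-- The mean Cartan torsion `I_γ = g^{αβ} C_{αβγ}`. -/
def meanCartan {n : ℕ} (L : (Fin n → ℝ) → (Fin n → ℝ) → ℝ)
    (ginv : Fin n → Fin n → (Fin n → ℝ) → (Fin n → ℝ) → ℝ) (γ : Fin n)
    (x y : Fin n → ℝ) : ℝ :=
  ∑ α, ∑ β, ginv α β x y * cartan L α β γ x y

/-- The spray coefficients `2G^α = g^{αδ}(y^γ ∂²L/∂x^γ∂y^δ − ∂L/∂x^δ)`. -/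
def spray {n : ℕ} (L : (Fin n → ℝ) → (Fin n → ℝ) → ℝ)
    (ginv : Fin n → Fin n → (Fin n → ℝ) → (Fin n → ℝ) → ℝ) (α : Fin n)
    (x y : Fin n → ℝ) : ℝ :=
  (1 / 2) * ∑ δ, ginv α δ x y * ((∑ γ, y γ * pdx (pdy L δ) γ x y) - pdx L δ x y)

/-- The nonlinear connection `N^α_μ = ∂G^α/∂y^μ`. -/
def nlc {n : ℕ} (L : (Fin n → ℝ) → (Fin n → ℝ) → ℝ)
    (ginv : Fin n → Fin n → (Fin n → ℝ) → (Fin n → ℝ) → ℝ) (α μ : Fin n)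
    (x y : Fin n → ℝ) : ℝ :=
  pdy (spray L ginv α) μ x y

/-- The horizontal derivative `δf/δx^μ = ∂f/∂x^μ − N^ν_μ ∂f/∂y^ν`. -/
def dhor {n : ℕ} (L : (Fin n → ℝ) → (Fin n → ℝ) → ℝ)
    (ginv : Fin n → Fin n → (Fin n → ℝ) → (Fin n → ℝ) → ℝ)
    (f : (Fin n → ℝ) → (Fin n → ℝ) → ℝ) (μ : Fin n) (x y : Fin n → ℝ) : ℝ :=
  pdx f μ x y - ∑ ν, nlc L ginv ν μ x y * pdy f ν x y

/-- The Chern–Rund horizontal connection coefficients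
`Γ^α_{βγ} = (1/2) g^{ασ}(δg_{σγ}/δx^β + δg_{σβ}/δx^γ − δg_{βγ}/δx^σ)`. -/
def chr {n : ℕ} (L : (Fin n → ℝ) → (Fin n → ℝ) → ℝ)
    (ginv : Fin n → Fin n → (Fin n → ℝ) → (Fin n → ℝ) → ℝ) (α β γ : Fin n)
    (x y : Fin n → ℝ) : ℝ :=
  (1 / 2) * ∑ σ, ginv α σ x y *
    (dhor L ginv (gmet L σ γ) β x y + dhor L ginv (gmet L σ β) γ x y
      - dhor L ginv (gmet L β γ) σ x y)

/-- The covariant derivative of a section: `D_μ s^α = ∂s^α/∂x^μ + N^α_μ(x,s(x))`. -/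
def Dsec {n : ℕ} (L : (Fin n → ℝ) → (Fin n → ℝ) → ℝ)
    (ginv : Fin n → Fin n → (Fin n → ℝ) → (Fin n → ℝ) → ℝ)
    (s : (Fin n → ℝ) → (Fin n → ℝ)) (μ α : Fin n) (x : Fin n → ℝ) : ℝ :=
  pd (fun x' => s x' α) μ x + nlc L ginv α μ x (s x)

/-- The Levi-Civita Christoffel symbols of the pullback metric `(s*g)_{αβ}(x) = g_{αβ}(x,s(x))`
(whose inverse is `g^{ασ}(x,s(x))`). -/
def chrPull {n : ℕ} (L : (Fin n → ℝ) → (Fin n → ℝ) → ℝ)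
    (ginv : Fin n → Fin n → (Fin n → ℝ) → (Fin n → ℝ) → ℝ)
    (s : (Fin n → ℝ) → (Fin n → ℝ)) (α β γ : Fin n) (x : Fin n → ℝ) : ℝ :=
  (1 / 2) * ∑ σ, ginv α σ x (s x) *
    (pd (fun x' => gmet L σ γ x' (s x')) β x + pd (fun x' => gmet L σ β x' (s x')) γ x
      - pd (fun x' => gmet L β γ x' (s x')) σ x)

/-- The Chern–Rund horizontal covariant derivative
`(∇^H_α Z)^β = δZ^β/δx^α + Γ^β_{μα} Z^μ` of a fiber-dependent vector field. -/
def hcov {n : ℕ} (L : (Fin n → ℝ) → (Fin n → ℝ) → ℝ)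
    (ginv : Fin n → Fin n → (Fin n → ℝ) → (Fin n → ℝ) → ℝ)
    (Z : (Fin n → ℝ) → (Fin n → ℝ) → (Fin n → ℝ)) (α β : Fin n) (x y : Fin n → ℝ) : ℝ :=
  dhor L ginv (fun x y => Z x y β) α x y + ∑ μ, chr L ginv β μ α x y * Z x y μ


section Helpers
variable {n : ℕ}


variable {n : ℕ}

abbrev Fu {n : ℕ} (f : (Fin n → ℝ) → (Fin n → ℝ) → ℝ) :
    ((Fin n → ℝ) × (Fin n → ℝ)) → ℝ := fun p => f p.1 p.2

theorem pdy_eq_joint {f : (Fin n → ℝ) → (Fin n → ℝ) → ℝ} {x y : Fin n → ℝ}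
    (hF : DifferentiableAt ℝ (Fu f) (x, y)) (σ : Fin n) :
    pdy f σ x y = fderiv ℝ (Fu f) (x, y) (0, Pi.single σ 1) := by
  have h1 : HasFDerivAt (fun y' : Fin n → ℝ => (x, y'))
      ((0 : (Fin n → ℝ) →L[ℝ] (Fin n → ℝ)).prod (ContinuousLinearMap.id ℝ (Fin n → ℝ))) y :=
    (hasFDerivAt_const x y).prodMk (hasFDerivAt_id y)
  have h2 : HasFDerivAt (f x)
      ((fderiv ℝ (Fu f) (x, y)).comp
        ((0 : (Fin n → ℝ) →L[ℝ] (Fin n → ℝ)).prod (ContinuousLinearMap.id ℝ (Fin n → ℝ)))) y :=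
    hF.hasFDerivAt.comp y h1
  rw [pdy, h2.fderiv]
  simp

theorem pdx_eq_joint {f : (Fin n → ℝ) → (Fin n → ℝ) → ℝ} {x y : Fin n → ℝ}
    (hF : DifferentiableAt ℝ (Fu f) (x, y)) (μ : Fin n) :
    pdx f μ x y = fderiv ℝ (Fu f) (x, y) (Pi.single μ 1, 0) := by
  have h1 : HasFDerivAt (fun x' : Fin n → ℝ => (x', y))
      ((ContinuousLinearMap.id ℝ (Fin n → ℝ)).prod (0 : (Fin n → ℝ) →L[ℝ] (Fin n → ℝ))) x :=
    (hasFDerivAt_id x).prodMk (hasFDerivAt_const y x)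
  have h2 : HasFDerivAt (fun x' => f x' y)
      ((fderiv ℝ (Fu f) (x, y)).comp
        ((ContinuousLinearMap.id ℝ (Fin n → ℝ)).prod (0 : (Fin n → ℝ) →L[ℝ] (Fin n → ℝ)))) x :=
    (hF.hasFDerivAt.comp x h1 :)
  rw [pdx, h2.fderiv]
  simp

theorem pd_coord_eq {s : (Fin n → ℝ) → (Fin n → ℝ)} {x : Fin n → ℝ}
    (hs : DifferentiableAt ℝ s x) (τ μ : Fin n) :
    pd (fun x' => s x' τ) μ x = fderiv ℝ s x (Pi.single μ 1) τ := by
  have h : HasFDerivAt (fun x' => s x' τ)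
      ((ContinuousLinearMap.proj τ).comp (fderiv ℝ s x)) x :=
    ((ContinuousLinearMap.proj τ).hasFDerivAt.comp x hs.hasFDerivAt : )
  rw [pd, h.fderiv]
  rfl

theorem chain_rule {f : (Fin n → ℝ) → (Fin n → ℝ) → ℝ} {s : (Fin n → ℝ) → (Fin n → ℝ)}
    {x : Fin n → ℝ} (hF : DifferentiableAt ℝ (Fu f) (x, s x))
    (hs : DifferentiableAt ℝ s x) (μ : Fin n) :
    pd (fun x' => f x' (s x')) μ x
      = pdx f μ x (s x) + ∑ τ, pdy f τ x (s x) * pd (fun x' => s x' τ) μ x := by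
  have hmap : HasFDerivAt (fun x' => (x', s x'))
      ((ContinuousLinearMap.id ℝ (Fin n → ℝ)).prod (fderiv ℝ s x)) x :=
    (hasFDerivAt_id x).prodMk hs.hasFDerivAt
  have hcomp : HasFDerivAt (fun x' => f x' (s x'))
      ((fderiv ℝ (Fu f) (x, s x)).comp
        ((ContinuousLinearMap.id ℝ (Fin n → ℝ)).prod (fderiv ℝ s x))) x :=
    (hF.hasFDerivAt.comp x hmap :)
  rw [pd, hcomp.fderiv]
  have hv : fderiv ℝ s x (Pi.single μ 1)
      = ∑ τ, Pi.single τ (fderiv ℝ s x (Pi.single μ 1) τ) :=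
    (Finset.univ_sum_single _).symm
  have hsplit : ((ContinuousLinearMap.id ℝ (Fin n → ℝ)).prod (fderiv ℝ s x)) (Pi.single μ 1)
      = (Pi.single μ 1, (0 : Fin n → ℝ)) + (0, fderiv ℝ s x (Pi.single μ 1)) := by
    simp [Prod.ext_iff]
  rw [ContinuousLinearMap.comp_apply, hsplit, map_add]
  congr 1
  · exact (pdx_eq_joint hF μ).symm
  · rw [hv]
    have : ((0 : Fin n → ℝ), ∑ τ, Pi.single τ (fderiv ℝ s x (Pi.single μ 1) τ))
        = ∑ τ : Fin n, ((0 : Fin n → ℝ), Pi.single τ (fderiv ℝ s x (Pi.single μ 1) τ)) := by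
      rw [Prod.ext_iff]
      constructor
      · simp [Prod.fst_sum]
      · simp [Prod.snd_sum]
    rw [this, map_sum]
    refine Finset.sum_congr rfl fun τ _ => ?_
    have hsm : ((0 : Fin n → ℝ), Pi.single τ (fderiv ℝ s x (Pi.single μ 1) τ))
        = (fderiv ℝ s x (Pi.single μ 1) τ) • ((0 : Fin n → ℝ), (Pi.single τ 1 : Fin n → ℝ)) := by
      rw [Prod.smul_mk, Prod.ext_iff]
      constructor
      · simp
      · rw [← Pi.single_smul, smul_eq_mul, mul_one]
    rw [hsm, map_smul, pdy_eq_joint hF τ, pd_coord_eq hs τ μ, smul_eq_mul]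
    ring

theorem infty_succ : (∞ : WithTop ℕ∞) + 1 ≤ ∞ := le_of_eq rfl

theorem diffAt_of_contDiffOn {U : Set ((Fin n → ℝ) × (Fin n → ℝ))} (hU : IsOpen U)
    {F : ((Fin n → ℝ) × (Fin n → ℝ)) → ℝ} (hf : ContDiffOn ℝ ∞ F U)
    {p : (Fin n → ℝ) × (Fin n → ℝ)} (hp : p ∈ U) : DifferentiableAt ℝ F p :=
  (hf.differentiableOn (by simp)).differentiableAt (hU.mem_nhds hp)

theorem contDiffOn_pdy {U : Set ((Fin n → ℝ) × (Fin n → ℝ))} (hU : IsOpen U)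
    {f : (Fin n → ℝ) → (Fin n → ℝ) → ℝ} (hf : ContDiffOn ℝ ∞ (Fu f) U) (σ : Fin n) :
    ContDiffOn ℝ ∞ (Fu (pdy f σ)) U := by
  have hfd : ContDiffOn ℝ ∞ (fderiv ℝ (Fu f)) U := hf.fderiv_of_isOpen hU infty_succ
  have hg : ContDiffOn ℝ ∞
      (fun p : (Fin n → ℝ) × (Fin n → ℝ) =>
        fderiv ℝ (Fu f) p ((0 : Fin n → ℝ), Pi.single σ (1:ℝ))) U :=
    hfd.clm_apply contDiffOn_const
  refine ContDiffOn.congr hg fun p hp => ?_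
  have : DifferentiableAt ℝ (Fu f) (p.1, p.2) := by
    rw [Prod.mk.eta]; exact diffAt_of_contDiffOn hU hf hp
  have h := pdy_eq_joint (f := f) (x := p.1) (y := p.2) this σ
  rw [Fu, h, Prod.mk.eta]

theorem pdy_pdy_symm {U : Set ((Fin n → ℝ) × (Fin n → ℝ))} (hU : IsOpen U)
    {f : (Fin n → ℝ) → (Fin n → ℝ) → ℝ} (hf : ContDiffOn ℝ ∞ (Fu f) U)
    {x y : Fin n → ℝ} (hp : (x, y) ∈ U) (β γ : Fin n) :
    pdy (pdy f γ) β x y = pdy (pdy f β) γ x y := by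
  set V : Set (Fin n → ℝ) := {y' | (x, y') ∈ U} with hVdef
  have hV : IsOpen V := hU.preimage (Continuous.prodMk_right x)
  have hyV : y ∈ V := hp
  have hC : ContDiffOn ℝ ∞ (f x) V := by
    have : ContDiffOn ℝ ∞ ((Fu f) ∘ fun y' => (x, y')) V :=
      hf.comp ((contDiff_const.prodMk contDiff_id).contDiffOn) fun y' hy' => hy'
    exact this
  have hdV : ∀ y' ∈ V, DifferentiableAt ℝ (f x) y' := fun y' hy' =>
    (hC.differentiableOn (by simp)).differentiableAt (hV.mem_nhds hy')
  have hev : ∀ᶠ y' in nhds y, HasFDerivAt (f x) (fderiv ℝ (f x) y') y' := by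
    filter_upwards [hV.mem_nhds hyV] with y' hy' using (hdV y' hy').hasFDerivAt
  have hd' : DifferentiableAt ℝ (fderiv ℝ (f x)) y :=
    (((hC.fderiv_of_isOpen hV infty_succ).differentiableOn (by simp))).differentiableAt
      (hV.mem_nhds hyV)
  have key : ∀ v w : Fin n → ℝ,
      fderiv ℝ (fun y' => fderiv ℝ (f x) y' v) y w = fderiv ℝ (fderiv ℝ (f x)) y w v := by
    intro v w
    have hcm : HasFDerivAt (fun y' => fderiv ℝ (f x) y' v)
        ((ContinuousLinearMap.apply ℝ ℝ v).comp (fderiv ℝ (fderiv ℝ (f x)) y)) y :=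
      (ContinuousLinearMap.apply ℝ ℝ v).hasFDerivAt.comp y hd'.hasFDerivAt
    rw [hcm.fderiv]; rfl
  have symm := second_derivative_symmetric_of_eventually hev hd'.hasFDerivAt
    (Pi.single β (1:ℝ)) (Pi.single γ (1:ℝ))
  show fderiv ℝ (fun y' => fderiv ℝ (f x) y' (Pi.single γ 1)) y (Pi.single β 1)
      = fderiv ℝ (fun y' => fderiv ℝ (f x) y' (Pi.single β 1)) y (Pi.single γ 1)
  rw [key, key, symm]

theorem pdx_congr_on {U : Set ((Fin n → ℝ) × (Fin n → ℝ))} (hU : IsOpen U)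
    {f f' : (Fin n → ℝ) → (Fin n → ℝ) → ℝ} (heq : ∀ q ∈ U, f q.1 q.2 = f' q.1 q.2)
    {x y : Fin n → ℝ} (hp : (x, y) ∈ U) (μ : Fin n) : pdx f μ x y = pdx f' μ x y := by
  have hW : IsOpen {x' | (x', y) ∈ U} := hU.preimage (continuous_id.prodMk continuous_const)
  have hev : (fun x' => f x' y) =ᶠ[nhds x] fun x' => f' x' y :=
    Filter.eventuallyEq_of_mem (hW.mem_nhds hp) fun x' hx' => heq _ hx'
  rw [pdx, pdx, hev.fderiv_eq]

theorem pdy_congr_on {U : Set ((Fin n → ℝ) × (Fin n → ℝ))} (hU : IsOpen U)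
    {f f' : (Fin n → ℝ) → (Fin n → ℝ) → ℝ} (heq : ∀ q ∈ U, f q.1 q.2 = f' q.1 q.2)
    {x y : Fin n → ℝ} (hp : (x, y) ∈ U) (τ : Fin n) : pdy f τ x y = pdy f' τ x y := by
  have hW : IsOpen {y' | (x, y') ∈ U} := hU.preimage (Continuous.prodMk_right x)
  have hev : f x =ᶠ[nhds y] f' x :=
    Filter.eventuallyEq_of_mem (hW.mem_nhds hp) fun y' hy' => heq (x, y') hy'
  rw [pdy, pdy, hev.fderiv_eq]

theorem alg_lemma (V : Fin n → Fin n → ℝ) (dh : Fin n → Fin n → Fin n → ℝ)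
    (Cc : Fin n → Fin n → Fin n → ℝ) (D : Fin n → Fin n → ℝ)
    (hV : ∀ a b, V a b = V b a)
    (hdh : ∀ a b c, dh a b c = dh b a c)
    (hC13 : ∀ a b c, Cc a b c = Cc c b a)
    (ν : Fin n) :
    ∑ μ, (1/2 : ℝ) * ∑ σ, V μ σ *
      ((dh σ ν μ + ∑ τ, 2 * Cc τ σ ν * D μ τ) + (dh σ μ ν + ∑ τ, 2 * Cc τ σ μ * D ν τ)
        - (dh μ ν σ + ∑ τ, 2 * Cc τ μ ν * D σ τ))
    = (∑ μ, (1/2 : ℝ) * ∑ σ, V μ σ * (dh σ μ ν + dh σ ν μ - dh ν μ σ))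
      + ∑ β, (∑ α, ∑ σ, V α σ * Cc α σ β) * D ν β := by
  have T13 : ∑ μ, ∑ σ, V μ σ * ∑ τ, Cc τ μ ν * D σ τ
      = ∑ μ, ∑ σ, V μ σ * ∑ τ, Cc τ σ ν * D μ τ := by
    rw [Finset.sum_comm]
    exact Finset.sum_congr rfl fun a _ => Finset.sum_congr rfl fun b _ => by rw [hV b a]
  have T2 : ∑ μ, ∑ σ, V μ σ * ∑ τ, Cc τ σ μ * D ν τ
      = ∑ β, (∑ α, ∑ σ, V α σ * Cc α σ β) * D ν β := by
    have lhs1 : ∑ μ, ∑ σ, V μ σ * ∑ τ, Cc τ σ μ * D ν τ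
        = ∑ μ, ∑ σ, ∑ τ, V μ σ * (Cc τ σ μ * D ν τ) := by
      simp only [Finset.mul_sum]
    have rhs1 : ∑ β, (∑ α, ∑ σ, V α σ * Cc α σ β) * D ν β
        = ∑ β, ∑ α, ∑ σ, V α σ * Cc α σ β * D ν β := by
      simp only [Finset.sum_mul]
    rw [lhs1, rhs1]
    have swap_inner : ∑ μ, ∑ σ, ∑ τ, V μ σ * (Cc τ σ μ * D ν τ)
        = ∑ μ, ∑ τ, ∑ σ, V μ σ * (Cc τ σ μ * D ν τ) :=
      Finset.sum_congr rfl fun μ _ => Finset.sum_comm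
    rw [swap_inner, Finset.sum_comm]
    refine Finset.sum_congr rfl fun τ _ => Finset.sum_congr rfl fun μ _ =>
      Finset.sum_congr rfl fun σ _ => ?_
    rw [hC13 τ σ μ]
    ring
  have expand : ∀ (μ σ : Fin n),
      V μ σ * ((dh σ ν μ + ∑ τ, 2 * Cc τ σ ν * D μ τ) + (dh σ μ ν + ∑ τ, 2 * Cc τ σ μ * D ν τ)
        - (dh μ ν σ + ∑ τ, 2 * Cc τ μ ν * D σ τ))
      = V μ σ * (dh σ μ ν + dh σ ν μ - dh ν μ σ)
        + 2 * (V μ σ * ∑ τ, Cc τ σ ν * D μ τ) + 2 * (V μ σ * ∑ τ, Cc τ σ μ * D ν τ)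
        - 2 * (V μ σ * ∑ τ, Cc τ μ ν * D σ τ) := by
    intro μ σ
    rw [hdh ν μ σ]
    have e1 : ∑ τ, 2 * Cc τ σ ν * D μ τ = 2 * ∑ τ, Cc τ σ ν * D μ τ := by
      rw [Finset.mul_sum]; exact Finset.sum_congr rfl fun τ _ => by ring
    have e2 : ∑ τ, 2 * Cc τ σ μ * D ν τ = 2 * ∑ τ, Cc τ σ μ * D ν τ := by
      rw [Finset.mul_sum]; exact Finset.sum_congr rfl fun τ _ => by ring
    have e3 : ∑ τ, 2 * Cc τ μ ν * D σ τ = 2 * ∑ τ, Cc τ μ ν * D σ τ := by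
      rw [Finset.mul_sum]; exact Finset.sum_congr rfl fun τ _ => by ring
    rw [e1, e2, e3]
    ring
  calc ∑ μ, (1/2 : ℝ) * ∑ σ, V μ σ *
      ((dh σ ν μ + ∑ τ, 2 * Cc τ σ ν * D μ τ) + (dh σ μ ν + ∑ τ, 2 * Cc τ σ μ * D ν τ)
        - (dh μ ν σ + ∑ τ, 2 * Cc τ μ ν * D σ τ))
      = ∑ μ, ((1/2 : ℝ) * ∑ σ, V μ σ * (dh σ μ ν + dh σ ν μ - dh ν μ σ)
          + (∑ σ, V μ σ * ∑ τ, Cc τ σ ν * D μ τ) + (∑ σ, V μ σ * ∑ τ, Cc τ σ μ * D ν τ)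
          - (∑ σ, V μ σ * ∑ τ, Cc τ μ ν * D σ τ)) := by
        refine Finset.sum_congr rfl fun μ _ => ?_
        rw [show (∑ σ, V μ σ *
            ((dh σ ν μ + ∑ τ, 2 * Cc τ σ ν * D μ τ) + (dh σ μ ν + ∑ τ, 2 * Cc τ σ μ * D ν τ)
              - (dh μ ν σ + ∑ τ, 2 * Cc τ μ ν * D σ τ)))
          = ∑ σ, (V μ σ * (dh σ μ ν + dh σ ν μ - dh ν μ σ)
            + 2 * (V μ σ * ∑ τ, Cc τ σ ν * D μ τ) + 2 * (V μ σ * ∑ τ, Cc τ σ μ * D ν τ)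
            - 2 * (V μ σ * ∑ τ, Cc τ μ ν * D σ τ)) from
          Finset.sum_congr rfl fun σ _ => expand μ σ]
        simp only [Finset.sum_add_distrib, Finset.sum_sub_distrib, ← Finset.mul_sum]
        ring
    _ = (∑ μ, (1/2 : ℝ) * ∑ σ, V μ σ * (dh σ μ ν + dh σ ν μ - dh ν μ σ))
          + (∑ μ, ∑ σ, V μ σ * ∑ τ, Cc τ σ ν * D μ τ)
          + (∑ μ, ∑ σ, V μ σ * ∑ τ, Cc τ σ μ * D ν τ)
          - (∑ μ, ∑ σ, V μ σ * ∑ τ, Cc τ μ ν * D σ τ) := by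
        simp only [Finset.sum_add_distrib, Finset.sum_sub_distrib]
    _ = (∑ μ, (1/2 : ℝ) * ∑ σ, V μ σ * (dh σ μ ν + dh σ ν μ - dh ν μ σ))
          + ∑ β, (∑ α, ∑ σ, V α σ * Cc α σ β) * D ν β := by
        rw [T13, T2]; ring

end Helpers

/-- (Rund-type divergence identity.) The Levi-Civita divergence of the
pulled-back field `s*Z` equals the pulled-back horizontal divergence plus mean-Cartan and
vertical-derivative correction terms. -/
theorem rund_divergence_identity
    {n : ℕ} (hn : 2 ≤ n) (Ω : Set (Fin n → ℝ)) (hΩopen : IsOpen Ω) (hΩconn : IsConnected Ω)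
    (L : (Fin n → ℝ) → (Fin n → ℝ) → ℝ)
    (hL : ContDiffOn ℝ (⊤ : ℕ∞) (fun p : (Fin n → ℝ) × (Fin n → ℝ) => L p.1 p.2)
      (Ω ×ˢ {y : Fin n → ℝ | y ≠ 0}))
    (hhom : ∀ x ∈ Ω, ∀ y : Fin n → ℝ, y ≠ 0 → ∀ t : ℝ, 0 < t → L x (t • y) = t ^ 2 * L x y)
    (ginv : Fin n → Fin n → (Fin n → ℝ) → (Fin n → ℝ) → ℝ)
    (hginv : ∀ x ∈ Ω, ∀ y : Fin n → ℝ, y ≠ 0 → ∀ μ ν : Fin n,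
      (∑ σ, gmet L μ σ x y * ginv σ ν x y) = if μ = ν then (1 : ℝ) else 0)
    (s : (Fin n → ℝ) → (Fin n → ℝ)) (hs : ContDiffOn ℝ (⊤ : ℕ∞) s Ω) (hs0 : ∀ x ∈ Ω, s x ≠ 0)
    (Z : (Fin n → ℝ) → (Fin n → ℝ) → (Fin n → ℝ))
    (hZ : ContDiffOn ℝ (⊤ : ℕ∞) (fun p : (Fin n → ℝ) × (Fin n → ℝ) => Z p.1 p.2)
      (Ω ×ˢ {y : Fin n → ℝ | y ≠ 0})) :
    ∀ x ∈ Ω,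
      (∑ μ, pd (fun x' => Z x' (s x') μ) μ x)
        + (∑ ν, (∑ μ, chrPull L ginv s μ μ ν x) * Z x (s x) ν) =
      (∑ μ, hcov L ginv Z μ μ x (s x))
        + (∑ μ, ∑ β, meanCartan L ginv β x (s x) * Z x (s x) μ * Dsec L ginv s μ β x)
        + (∑ μ, ∑ β, pdy (fun x y => Z x y μ) β x (s x) * Dsec L ginv s μ β x) := by
  intro x hx
  have hyne : s x ≠ 0 := hs0 x hx
  set U : Set ((Fin n → ℝ) × (Fin n → ℝ)) := Ω ×ˢ {y : Fin n → ℝ | y ≠ 0} with hUdef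
  have hU : IsOpen U := hΩopen.prod isOpen_ne
  have hp : (x, s x) ∈ U := ⟨hx, hyne⟩
  have hL' : ContDiffOn ℝ ∞ (Fu L) U := hL.of_le (by simp)
  have hsd : DifferentiableAt ℝ s x :=
    (hs.differentiableOn (by simp)).differentiableAt (hΩopen.mem_nhds hx)
  have hZc : ∀ μ : Fin n, ContDiffOn ℝ ∞ (Fu (fun x y => Z x y μ)) U := fun μ =>
    (ContinuousLinearMap.proj (R := ℝ) (φ := fun _ : Fin n => ℝ) μ).contDiff.comp_contDiffOn
      (hZ.of_le (by simp))
  have hg2 : ∀ σ γ : Fin n, ContDiffOn ℝ ∞ (Fu (gmet L σ γ)) U := fun σ γ =>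
    contDiffOn_pdy hU (contDiffOn_pdy hU hL' γ) σ
  have hgs : ∀ q ∈ U, ∀ a b : Fin n, gmet L a b q.1 q.2 = gmet L b a q.1 q.2 := by
    intro q hq a b
    have hq' : (q.1, q.2) ∈ U := by rwa [Prod.mk.eta]
    exact pdy_pdy_symm hU hL' hq' a b
  -- Cartan torsion symmetries at (x, s x)
  have c12 : ∀ a b c : Fin n, cartan L a b c x (s x) = cartan L b a c x (s x) := by
    intro a b c
    show (1/2 : ℝ) * pdy (pdy (pdy L c) b) a x (s x)
        = (1/2 : ℝ) * pdy (pdy (pdy L c) a) b x (s x)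
    rw [pdy_pdy_symm hU (contDiffOn_pdy hU hL' c) hp a b]
  have c23 : ∀ a b c : Fin n, cartan L a b c x (s x) = cartan L a c b x (s x) := by
    intro a b c
    rw [cartan, cartan, pdy_congr_on hU (fun q hq => hgs q hq b c) hp a]
  have hC13 : ∀ a b c : Fin n, cartan L a b c x (s x) = cartan L c b a x (s x) := by
    intro a b c
    rw [c12 a b c, c23 b a c, c12 b c a]
  -- dhor symmetry in metric indices
  have hdh : ∀ a b c : Fin n,
      dhor L ginv (gmet L a b) c x (s x) = dhor L ginv (gmet L b a) c x (s x) := by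
    intro a b c
    rw [dhor, dhor, pdx_congr_on hU (fun q hq => hgs q hq a b) hp c]
    congr 1
    exact Finset.sum_congr rfl fun τ _ => by
      rw [pdy_congr_on hU (fun q hq => hgs q hq a b) hp τ]
  -- symmetry of ginv at (x, s x)
  have hVsym : ∀ a b : Fin n, ginv a b x (s x) = ginv b a x (s x) := by
    set G : Matrix (Fin n) (Fin n) ℝ := Matrix.of fun a b => gmet L a b x (s x) with hG
    set Vm : Matrix (Fin n) (Fin n) ℝ := Matrix.of fun a b => ginv a b x (s x) with hVm
    have hGV : G * Vm = 1 := by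
      ext a b
      rw [Matrix.mul_apply, Matrix.one_apply]
      exact hginv x hx (s x) hyne a b
    have hGsym : G.transpose = G := by
      ext a b
      exact hgs (x, s x) hp b a
    have hVsymM : Vm.transpose = Vm := by
      calc Vm.transpose = Vm.transpose * (G * Vm) := by rw [hGV, Matrix.mul_one]
        _ = (Vm.transpose * G.transpose) * Vm := by rw [hGsym, Matrix.mul_assoc]
        _ = (G * Vm).transpose * Vm := by rw [Matrix.transpose_mul]
        _ = Vm := by rw [hGV, Matrix.transpose_one, Matrix.one_mul]
    intro a b
    have := congrFun (congrFun hVsymM a) b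
    exact this.symm
  -- Step A : chain rule for Z
  have stepA : ∀ μ : Fin n, pd (fun x' => Z x' (s x') μ) μ x
      = dhor L ginv (fun x y => Z x y μ) μ x (s x)
        + ∑ τ, pdy (fun x y => Z x y μ) τ x (s x) * Dsec L ginv s μ τ x := by
    intro μ
    have hdF : DifferentiableAt ℝ (Fu (fun x y => Z x y μ)) (x, s x) :=
      diffAt_of_contDiffOn hU (hZc μ) hp
    rw [chain_rule hdF hsd μ, dhor]
    simp only [Dsec, mul_add, Finset.sum_add_distrib]
    have hswap : ∑ ν, nlc L ginv ν μ x (s x) * pdy (fun x y => Z x y μ) ν x (s x)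
        = ∑ τ, pdy (fun x y => Z x y μ) τ x (s x) * nlc L ginv τ μ x (s x) :=
      Finset.sum_congr rfl fun τ _ => mul_comm _ _
    rw [hswap]
    ring
  -- Step B : chain rule for gmet
  have stepB : ∀ σ γ β : Fin n, pd (fun x' => gmet L σ γ x' (s x')) β x
      = dhor L ginv (gmet L σ γ) β x (s x)
        + ∑ τ, 2 * cartan L τ σ γ x (s x) * Dsec L ginv s β τ x := by
    intro σ γ β
    have hdF : DifferentiableAt ℝ (Fu (gmet L σ γ)) (x, s x) :=
      diffAt_of_contDiffOn hU (hg2 σ γ) hp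
    rw [chain_rule hdF hsd β, dhor]
    have hrw : ∑ τ, 2 * cartan L τ σ γ x (s x) * Dsec L ginv s β τ x
        = ∑ τ, pdy (gmet L σ γ) τ x (s x) * pd (fun x' => s x' τ) β x
          + ∑ τ, nlc L ginv τ β x (s x) * pdy (gmet L σ γ) τ x (s x) := by
      rw [← Finset.sum_add_distrib]
      refine Finset.sum_congr rfl fun τ _ => ?_
      rw [cartan, Dsec]
      ring
    rw [hrw]
    ring
  -- Step D : the Christoffel trace identity
  have stepD : ∀ ν : Fin n, ∑ μ, chrPull L ginv s μ μ ν x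
      = (∑ μ, chr L ginv μ ν μ x (s x))
        + ∑ β, meanCartan L ginv β x (s x) * Dsec L ginv s ν β x := by
    intro ν
    have expand : ∑ μ, chrPull L ginv s μ μ ν x
        = ∑ μ, (1/2 : ℝ) * ∑ σ, ginv μ σ x (s x) *
            ((dhor L ginv (gmet L σ ν) μ x (s x)
                + ∑ τ, 2 * cartan L τ σ ν x (s x) * Dsec L ginv s μ τ x)
              + (dhor L ginv (gmet L σ μ) ν x (s x)
                + ∑ τ, 2 * cartan L τ σ μ x (s x) * Dsec L ginv s ν τ x)
              - (dhor L ginv (gmet L μ ν) σ x (s x)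
                + ∑ τ, 2 * cartan L τ μ ν x (s x) * Dsec L ginv s σ τ x)) := by
      refine Finset.sum_congr rfl fun μ _ => ?_
      rw [chrPull]
      congr 1
      refine Finset.sum_congr rfl fun σ _ => ?_
      rw [stepB σ ν μ, stepB σ μ ν, stepB μ ν σ]
    rw [expand, alg_lemma (fun a b => ginv a b x (s x))
      (fun a b c => dhor L ginv (gmet L a b) c x (s x))
      (fun a b c => cartan L a b c x (s x))
      (fun a b => Dsec L ginv s a b x) hVsym (fun a b c => hdh a b c) hC13 ν]
    congr 1
  -- assemble
  have hL1 : ∑ μ, pd (fun x' => Z x' (s x') μ) μ x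
      = (∑ μ, dhor L ginv (fun x y => Z x y μ) μ x (s x))
        + ∑ μ, ∑ τ, pdy (fun x y => Z x y μ) τ x (s x) * Dsec L ginv s μ τ x := by
    rw [← Finset.sum_add_distrib]
    exact Finset.sum_congr rfl fun μ _ => stepA μ
  have hL2 : ∑ ν, (∑ μ, chrPull L ginv s μ μ ν x) * Z x (s x) ν
      = (∑ ν, (∑ μ, chr L ginv μ ν μ x (s x)) * Z x (s x) ν)
        + ∑ ν, (∑ β, meanCartan L ginv β x (s x) * Dsec L ginv s ν β x) * Z x (s x) ν := by
    rw [← Finset.sum_add_distrib]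
    exact Finset.sum_congr rfl fun ν _ => by rw [stepD ν]; ring
  rw [hL1, hL2]
  have hhcov : ∑ μ, hcov L ginv Z μ μ x (s x)
      = (∑ μ, dhor L ginv (fun x y => Z x y μ) μ x (s x))
        + ∑ μ, ∑ ρ, chr L ginv μ ρ μ x (s x) * Z x (s x) ρ := by
    rw [← Finset.sum_add_distrib]
    exact Finset.sum_congr rfl fun μ _ => rfl
  have hswap2 : ∑ ν, (∑ μ, chr L ginv μ ν μ x (s x)) * Z x (s x) ν
      = ∑ μ, ∑ ρ, chr L ginv μ ρ μ x (s x) * Z x (s x) ρ := by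
    simp only [Finset.sum_mul]
    exact Finset.sum_comm
  have hcart : ∑ ν, (∑ β, meanCartan L ginv β x (s x) * Dsec L ginv s ν β x) * Z x (s x) ν
      = ∑ μ, ∑ β, meanCartan L ginv β x (s x) * Z x (s x) μ * Dsec L ginv s μ β x := by
    refine Finset.sum_congr rfl fun ν _ => ?_
    rw [Finset.sum_mul]
    exact Finset.sum_congr rfl fun β _ => by ring
  have hvert : ∑ μ, ∑ τ, pdy (fun x y => Z x y μ) τ x (s x) * Dsec L ginv s μ τ x
      = ∑ μ, ∑ β, pdy (fun x y => Z x y μ) β x (s x) * Dsec L ginv s μ β x := rfl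
  rw [hhcov, hswap2, hcart]
  ring
end
end

section
/- (Pointwise form of the genuinely Finslerian divergence theorem.) Assume the mean Cartan torsion vanishes identically: I_γ(x,y) = 0 for all (x,y) ∈ Ω × (ℝⁿ \ {0}) and all γ. Let Z : Ω × (ℝⁿ \ {0}) → ℝⁿ be a smooth fiber-dependent vector field and let s : Ω → ℝⁿ \ {0} be a smooth section. Then for every x ∈ Ω, with ρ(x) = √|det(g_{μν}(x, s(x)))| (which is independent of the choice of section since I ≡ 0): ∂/∂x^μ [ ρ(x) Z^μ(x, s(x)) ] = ρ(x) · [ (∇^H·Z)(x, s(x)) + (∂Z^μ/∂y^β)(x, s(x)) D_μ s^β ]. -/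
noncomputable section

open scoped ContDiff


lemma hasFDerivAt_slice_x {n : ℕ} {F : ((Fin n → ℝ) × (Fin n → ℝ)) → ℝ} {x y : Fin n → ℝ}
    (hF : DifferentiableAt ℝ F (x, y)) :
    HasFDerivAt (fun x' => F (x', y))
      ((fderiv ℝ F (x, y)).comp (ContinuousLinearMap.inl ℝ _ _)) x :=
  hF.hasFDerivAt.comp x (hasFDerivAt_prodMk_left x y)

lemma hasFDerivAt_slice_y {n : ℕ} {F : ((Fin n → ℝ) × (Fin n → ℝ)) → ℝ} {x y : Fin n → ℝ}
    (hF : DifferentiableAt ℝ F (x, y)) :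
    HasFDerivAt (fun y' => F (x, y'))
      ((fderiv ℝ F (x, y)).comp (ContinuousLinearMap.inr ℝ _ _)) y :=
  hF.hasFDerivAt.comp y (hasFDerivAt_prodMk_right x y)

lemma pdx_eqF {n : ℕ} {U : Set ((Fin n → ℝ) × (Fin n → ℝ))} (hU : IsOpen U)
    {f : (Fin n → ℝ) → (Fin n → ℝ) → ℝ} {F : ((Fin n → ℝ) × (Fin n → ℝ)) → ℝ}
    (hfF : ∀ p ∈ U, f p.1 p.2 = F p) {x y : Fin n → ℝ} (hp : (x, y) ∈ U)
    (hF : DifferentiableAt ℝ F (x, y)) (μ : Fin n) :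
    pdx f μ x y = fderiv ℝ F (x, y) (Pi.single μ 1, 0) := by
  have hopen : IsOpen {x' | (x', y) ∈ U} := hU.preimage (continuous_id.prodMk continuous_const)
  have h1 : (fun x' => f x' y) =ᶠ[nhds x] fun x' => F (x', y) := by
    filter_upwards [hopen.mem_nhds hp] with x' hx' using hfF _ hx'
  unfold pdx
  rw [h1.fderiv_eq, (hasFDerivAt_slice_x hF).fderiv]
  rfl

lemma pdy_eqF {n : ℕ} {U : Set ((Fin n → ℝ) × (Fin n → ℝ))} (hU : IsOpen U)
    {f : (Fin n → ℝ) → (Fin n → ℝ) → ℝ} {F : ((Fin n → ℝ) × (Fin n → ℝ)) → ℝ}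
    (hfF : ∀ p ∈ U, f p.1 p.2 = F p) {x y : Fin n → ℝ} (hp : (x, y) ∈ U)
    (hF : DifferentiableAt ℝ F (x, y)) (μ : Fin n) :
    pdy f μ x y = fderiv ℝ F (x, y) (0, Pi.single μ 1) := by
  have hopen : IsOpen {y' | (x, y') ∈ U} := hU.preimage (continuous_const.prodMk continuous_id)
  have h1 : (f x) =ᶠ[nhds y] fun y' => F (x, y') := by
    filter_upwards [hopen.mem_nhds hp] with y' hy' using hfF _ hy'
  unfold pdy
  rw [h1.fderiv_eq, (hasFDerivAt_slice_y hF).fderiv]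
  rfl

lemma clm_pi_apply {n : ℕ} (φ : (Fin n → ℝ) →L[ℝ] ℝ) (w : Fin n → ℝ) :
    φ w = ∑ β, w β * φ (Pi.single β 1) := by
  have hw : w = ∑ β, w β • (Pi.single β 1 : Fin n → ℝ) := by
    funext j; simp [Finset.sum_apply, Pi.single_apply]
  conv_lhs => rw [hw]
  rw [map_sum]; simp [smul_eq_mul]

lemma pd_coord {n : ℕ} {s : (Fin n → ℝ) → (Fin n → ℝ)} {x : Fin n → ℝ}
    (hs : DifferentiableAt ℝ s x) (μ β : Fin n) :
    pd (fun x' => s x' β) μ x = fderiv ℝ s x (Pi.single μ 1) β := by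
  have h : HasFDerivAt (fun x' => s x' β)
      ((ContinuousLinearMap.proj β).comp (fderiv ℝ s x)) x :=
    by simpa [Function.comp_def] using (ContinuousLinearMap.proj β).hasFDerivAt.comp x hs.hasFDerivAt
  rw [pd, h.fderiv]; rfl

/-- Chain rule for `x' ↦ f x' (s x')` where `f` agrees with a differentiable `F` on open `U`. -/
lemma comp_section_hasFDerivAt {n : ℕ} {U : Set ((Fin n → ℝ) × (Fin n → ℝ))} (hU : IsOpen U)
    {f : (Fin n → ℝ) → (Fin n → ℝ) → ℝ} {F : ((Fin n → ℝ) × (Fin n → ℝ)) → ℝ}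
    (hfF : ∀ p ∈ U, f p.1 p.2 = F p) {s : (Fin n → ℝ) → (Fin n → ℝ)} {x : Fin n → ℝ}
    (hp : (x, s x) ∈ U) (hF : DifferentiableAt ℝ F (x, s x)) (hs : DifferentiableAt ℝ s x) :
    HasFDerivAt (fun x' => f x' (s x'))
      ((fderiv ℝ F (x, s x)).comp ((ContinuousLinearMap.id ℝ _).prod (fderiv ℝ s x))) x := by
  have hC : HasFDerivAt (fun x' => F (x', s x'))
      ((fderiv ℝ F (x, s x)).comp ((ContinuousLinearMap.id ℝ _).prod (fderiv ℝ s x))) x :=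
    hF.hasFDerivAt.comp x ((hasFDerivAt_id x).prodMk hs.hasFDerivAt)
  apply hC.congr_of_eventuallyEq
  have hev : ∀ᶠ x' in nhds x, (x', s x') ∈ U :=
    (continuousAt_id.prodMk hs.continuousAt).preimage_mem_nhds (hU.mem_nhds hp)
  filter_upwards [hev] with x' hx'
  simpa using hfF _ hx'

lemma comp_section_pd {n : ℕ} {U : Set ((Fin n → ℝ) × (Fin n → ℝ))} (hU : IsOpen U)
    {f : (Fin n → ℝ) → (Fin n → ℝ) → ℝ} {F : ((Fin n → ℝ) × (Fin n → ℝ)) → ℝ}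
    (hfF : ∀ p ∈ U, f p.1 p.2 = F p) {s : (Fin n → ℝ) → (Fin n → ℝ)} {x : Fin n → ℝ}
    (hp : (x, s x) ∈ U) (hF : DifferentiableAt ℝ F (x, s x)) (hs : DifferentiableAt ℝ s x)
    (μ : Fin n) :
    pd (fun x' => f x' (s x')) μ x
      = pdx f μ x (s x) + ∑ β, pdy f β x (s x) * pd (fun x' => s x' β) μ x := by
  rw [pd, (comp_section_hasFDerivAt hU hfF hp hF hs).fderiv]
  have hsplit : ((fderiv ℝ F (x, s x)).comp
      ((ContinuousLinearMap.id ℝ _).prod (fderiv ℝ s x))) (Pi.single μ 1)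
      = fderiv ℝ F (x, s x) (Pi.single μ 1, 0)
        + fderiv ℝ F (x, s x) (0, fderiv ℝ s x (Pi.single μ 1)) := by
    rw [← map_add]
    have he : ((Pi.single μ 1 : Fin n → ℝ), (0 : Fin n → ℝ))
        + ((0 : Fin n → ℝ), fderiv ℝ s x (Pi.single μ 1))
        = (Pi.single μ 1, fderiv ℝ s x (Pi.single μ 1)) := by simp
    rw [he]
    rfl
  rw [hsplit, pdx_eqF hU hfF hp hF μ]
  congr 1
  -- second term
  set w := fderiv ℝ s x (Pi.single μ 1) with hw
  have : fderiv ℝ F (x, s x) (0, w)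
      = ((fderiv ℝ F (x, s x)).comp (ContinuousLinearMap.inr ℝ _ _)) w := rfl
  rw [this, clm_pi_apply]
  refine Finset.sum_congr rfl fun β _ => ?_
  rw [pdy_eqF hU hfF hp hF β, pd_coord hs]
  rw [mul_comm]
  rfl

open Finset in
lemma jacobi_hasFDerivAt {E' : Type*} [NormedAddCommGroup E'] [NormedSpace ℝ E'] {m : ℕ}
    (A : E' → Matrix (Fin m) (Fin m) ℝ) (A' : Fin m → Fin m → (E' →L[ℝ] ℝ)) {x : E'}
    (h : ∀ i j, HasFDerivAt (fun t => A t i j) (A' i j) x) :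
    HasFDerivAt (fun t => (A t).det)
      (∑ σ : Equiv.Perm (Fin m), ((Equiv.Perm.sign σ : ℤ) : ℝ) •
        ∑ i, (∏ j ∈ Finset.univ.erase i, A x (σ j) j) • A' (σ i) i) x := by
  have hfun : (fun t => (A t).det)
      = fun t => ∑ σ : Equiv.Perm (Fin m),
          ((Equiv.Perm.sign σ : ℤ) : ℝ) * ∏ i, A t (σ i) i := by
    funext t; exact Matrix.det_apply' (A t)
  rw [hfun]
  apply HasFDerivAt.fun_sum
  intro σ _
  have hprod : HasFDerivAt (fun t => ∏ i, A t (σ i) i)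
      (∑ i, (∏ j ∈ Finset.univ.erase i, A x (σ j) j) • A' (σ i) i) x :=
    HasFDerivAt.finset_prod (fun i _ => h (σ i) i)
  simpa [smul_smul] using hprod.const_mul (((Equiv.Perm.sign σ : ℤ) : ℝ))

open Finset in
lemma jacobi_apply {E' : Type*} [NormedAddCommGroup E'] [NormedSpace ℝ E'] {m : ℕ}
    (A : E' → Matrix (Fin m) (Fin m) ℝ) (A' : Fin m → Fin m → (E' →L[ℝ] ℝ)) (x : E') (v : E') :
    (∑ σ : Equiv.Perm (Fin m), ((Equiv.Perm.sign σ : ℤ) : ℝ) •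
        ∑ i, (∏ j ∈ Finset.univ.erase i, A x (σ j) j) • A' (σ i) i) v
      = ∑ i, ∑ k, (A x).adjugate i k * A' k i v := by
  classical
  have step1 : (∑ σ : Equiv.Perm (Fin m), ((Equiv.Perm.sign σ : ℤ) : ℝ) •
        ∑ i, (∏ j ∈ Finset.univ.erase i, A x (σ j) j) • A' (σ i) i) v
      = ∑ i, ∑ σ : Equiv.Perm (Fin m), ((Equiv.Perm.sign σ : ℤ) : ℝ) *
          ((∏ j ∈ Finset.univ.erase i, A x (σ j) j) * A' (σ i) i v) := by
    rw [ContinuousLinearMap.sum_apply, ← Finset.sum_comm]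
    refine Finset.sum_congr rfl fun σ _ => ?_
    simp [ContinuousLinearMap.sum_apply, Finset.mul_sum, smul_eq_mul, mul_assoc]
  rw [step1]
  refine Finset.sum_congr rfl fun i _ => ?_
  set c : Fin m → ℝ := fun k => A' k i v with hc
  have step2 : ∑ σ : Equiv.Perm (Fin m), ((Equiv.Perm.sign σ : ℤ) : ℝ) *
          ((∏ j ∈ Finset.univ.erase i, A x (σ j) j) * c (σ i))
      = ((A x).updateCol i c).det := by
    rw [Matrix.det_apply']
    refine Finset.sum_congr rfl fun σ _ => ?_
    congr 1
    rw [← Finset.mul_prod_erase Finset.univ _ (Finset.mem_univ i)]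
    rw [mul_comm]
    congr 1
    · rw [Matrix.updateCol_apply, if_pos rfl]
    · exact Finset.prod_congr rfl fun j hj => by
        rw [Matrix.updateCol_apply, if_neg (Finset.ne_of_mem_erase hj)]
  rw [step2, ← Matrix.cramer_apply, Matrix.cramer_eq_adjugate_mulVec]
  simp [Matrix.mulVec, dotProduct, hc]

lemma hasFDerivAt_sqrt_abs {E' : Type*} [NormedAddCommGroup E'] [NormedSpace ℝ E']
    (g : E' → ℝ) {g' : E' →L[ℝ] ℝ} {x : E'} (h : HasFDerivAt g g' x) (hg : g x ≠ 0) :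
    HasFDerivAt (fun t => Real.sqrt |g t|) ((Real.sqrt |g x| / (2 * g x)) • g') x := by
  rcases lt_or_gt_of_ne hg with hneg | hpos
  · have hlt : ∀ᶠ t in nhds x, g t < 0 := by
      have := h.continuousAt.preimage_mem_nhds (Iio_mem_nhds hneg)
      filter_upwards [this] with t ht using ht
    have hev : (fun t => |g t|) =ᶠ[nhds x] (fun t => -g t) := by
      filter_upwards [hlt] with t ht using abs_of_neg ht
    have habs : HasFDerivAt (fun t => |g t|) (-g') x := h.neg.congr_of_eventuallyEq hev
    have hsq := habs.sqrt (abs_ne_zero.mpr hg)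
    have hscal : (1 / (2 * Real.sqrt |g x|)) • (-g') = (Real.sqrt |g x| / (2 * g x)) • g' := by
      rw [smul_neg, ← neg_smul]
      congr 1
      have h1 : Real.sqrt |g x| * Real.sqrt |g x| = |g x| := Real.mul_self_sqrt (abs_nonneg _)
      rw [abs_of_neg hneg] at h1 ⊢
      have h3 : Real.sqrt (-g x) > 0 := Real.sqrt_pos.mpr (by linarith)
      field_simp [h3.ne', hneg.ne]
      nlinarith [h1, h3]
    rwa [hscal] at hsq
  · have hlt : ∀ᶠ t in nhds x, 0 < g t := by
      have := h.continuousAt.preimage_mem_nhds (Ioi_mem_nhds hpos)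
      filter_upwards [this] with t ht using ht
    have hev : (fun t => |g t|) =ᶠ[nhds x] (fun t => g t) := by
      filter_upwards [hlt] with t ht using abs_of_pos ht
    have habs : HasFDerivAt (fun t => |g t|) g' x := h.congr_of_eventuallyEq hev
    have hsq := habs.sqrt (abs_ne_zero.mpr hg)
    have hscal : (1 / (2 * Real.sqrt |g x|)) • g' = (Real.sqrt |g x| / (2 * g x)) • g' := by
      congr 1
      have h1 : Real.sqrt |g x| * Real.sqrt |g x| = |g x| := Real.mul_self_sqrt (abs_nonneg _)
      rw [abs_of_pos hpos] at h1 ⊢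
      have h3 : Real.sqrt (g x) > 0 := Real.sqrt_pos.mpr hpos
      field_simp [h3.ne', hpos.ne']
      nlinarith [h1, h3]
    rwa [hscal] at hsq


/-- generic: derivative in the `y`-slice of `φ ∘ G`. -/
lemma fderiv_slice_y_apply {n : ℕ} {F' : Type*} [NormedAddCommGroup F'] [NormedSpace ℝ F']
    {G : (Fin n → ℝ) × (Fin n → ℝ) → F'} {x y : Fin n → ℝ}
    (hG : DifferentiableAt ℝ G (x, y)) (φ : F' →L[ℝ] ℝ) (v : Fin n → ℝ) :
    fderiv ℝ (fun y' => φ (G (x, y'))) y v = φ (fderiv ℝ G (x, y) (0, v)) := by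
  have h1 : HasFDerivAt (fun y' => G (x, y'))
      ((fderiv ℝ G (x, y)).comp (ContinuousLinearMap.inr ℝ _ _)) y :=
    hG.hasFDerivAt.comp y (hasFDerivAt_prodMk_right x y)
  have h2 : HasFDerivAt (fun y' => φ (G (x, y')))
      (φ.comp ((fderiv ℝ G (x, y)).comp (ContinuousLinearMap.inr ℝ _ _))) y := by
    simpa [Function.comp_def] using φ.hasFDerivAt.comp y h1
  rw [h2.fderiv]; rfl

lemma fderiv_slice_x_apply {n : ℕ} {F' : Type*} [NormedAddCommGroup F'] [NormedSpace ℝ F']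
    {G : (Fin n → ℝ) × (Fin n → ℝ) → F'} {x y : Fin n → ℝ}
    (hG : DifferentiableAt ℝ G (x, y)) (φ : F' →L[ℝ] ℝ) (v : Fin n → ℝ) :
    fderiv ℝ (fun x' => φ (G (x', y))) x v = φ (fderiv ℝ G (x, y) (v, 0)) := by
  have h1 : HasFDerivAt (fun x' => G (x', y))
      ((fderiv ℝ G (x, y)).comp (ContinuousLinearMap.inl ℝ _ _)) x :=
    hG.hasFDerivAt.comp x (hasFDerivAt_prodMk_left x y)
  have h2 : HasFDerivAt (fun x' => φ (G (x', y)))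
      (φ.comp ((fderiv ℝ G (x, y)).comp (ContinuousLinearMap.inl ℝ _ _))) x := by
    simpa [Function.comp_def] using φ.hasFDerivAt.comp x h1
  rw [h2.fderiv]; rfl

lemma fderiv_clm_apply_const {P F' : Type*} [NormedAddCommGroup P] [NormedSpace ℝ P]
    [NormedAddCommGroup F'] [NormedSpace ℝ F']
    {G : P → F'} {p : P} (hG : DifferentiableAt ℝ G p) (φ : F' →L[ℝ] ℝ) (u : P) :
    fderiv ℝ (fun q => φ (G q)) p u = φ (fderiv ℝ G p u) := by
  have h2 : HasFDerivAt (fun q => φ (G q)) (φ.comp (fderiv ℝ G p)) p := by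
    simpa [Function.comp_def] using φ.hasFDerivAt.comp p hG.hasFDerivAt
  rw [h2.fderiv]; rfl

section ladder
variable {n : ℕ}

def Luf {n : ℕ} (L : (Fin n → ℝ) → (Fin n → ℝ) → ℝ) : ((Fin n → ℝ) × (Fin n → ℝ)) → ℝ :=
  fun p => L p.1 p.2
def Phif {n : ℕ} (L : (Fin n → ℝ) → (Fin n → ℝ) → ℝ) := fderiv ℝ (Luf L)
def Psif {n : ℕ} (L : (Fin n → ℝ) → (Fin n → ℝ) → ℝ) := fderiv ℝ (Phif L)
def Thetaf {n : ℕ} (L : (Fin n → ℝ) → (Fin n → ℝ) → ℝ) := fderiv ℝ (Psif L)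

variable {L : (Fin n → ℝ) → (Fin n → ℝ) → ℝ} {U : Set ((Fin n → ℝ) × (Fin n → ℝ))}

lemma diffAt_of_cdOn {P F' : Type*} [NormedAddCommGroup P] [NormedSpace ℝ P]
    [NormedAddCommGroup F'] [NormedSpace ℝ F'] {G : P → F'} {V : Set P} (hV : IsOpen V)
    (h : ContDiffOn ℝ ∞ G V) {p : P} (hp : p ∈ V) : DifferentiableAt ℝ G p :=
  (h.differentiableOn (by simp)).differentiableAt (hV.mem_nhds hp)

lemma hPhi (hU : IsOpen U) (hL : ContDiffOn ℝ ∞ (Luf L) U) : ContDiffOn ℝ ∞ (Phif L) U :=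
  hL.fderiv_of_isOpen hU (by simp)
lemma hPsi (hU : IsOpen U) (hL : ContDiffOn ℝ ∞ (Luf L) U) : ContDiffOn ℝ ∞ (Psif L) U :=
  (hPhi hU hL).fderiv_of_isOpen hU (by simp)

/-- C1 -/
lemma pdy_eq_Phi (hU : IsOpen U) (hL : ContDiffOn ℝ ∞ (Luf L) U) {x y : Fin n → ℝ}
    (hp : (x, y) ∈ U) (b : Fin n) :
    pdy L b x y = Phif L (x, y) (0, Pi.single b 1) := by
  have hd := diffAt_of_cdOn hU hL hp
  have h1 : HasFDerivAt (fun y' => Luf L (x, y'))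
      ((Phif L (x, y)).comp (ContinuousLinearMap.inr ℝ _ _)) y :=
    hd.hasFDerivAt.comp y (hasFDerivAt_prodMk_right x y)
  have : pdy L b x y = fderiv ℝ (fun y' => Luf L (x, y')) y (Pi.single b 1) := rfl
  rw [this, h1.fderiv]; rfl

/-- C2 -/
lemma gmet_eq_Psi (hU : IsOpen U) (hL : ContDiffOn ℝ ∞ (Luf L) U) {x y : Fin n → ℝ}
    (hp : (x, y) ∈ U) (a b : Fin n) :
    gmet L a b x y = Psif L (x, y) (0, Pi.single a 1) (0, Pi.single b 1) := by
  have hopen : IsOpen {y' | (x, y') ∈ U} := hU.preimage (continuous_const.prodMk continuous_id)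
  have hev : (fun y' => pdy L b x y') =ᶠ[nhds y]
      (fun y' => (ContinuousLinearMap.apply ℝ ℝ ((0 : Fin n → ℝ), Pi.single b 1))
        (Phif L (x, y'))) := by
    filter_upwards [hopen.mem_nhds hp] with y' hy' using pdy_eq_Phi hU hL hy' b
  have h0 : gmet L a b x y = fderiv ℝ (fun y' => pdy L b x y') y (Pi.single a 1) := rfl
  rw [h0, hev.fderiv_eq]
  exact fderiv_slice_y_apply (diffAt_of_cdOn hU (hPhi hU hL) hp)
    (ContinuousLinearMap.apply ℝ ℝ ((0 : Fin n → ℝ), Pi.single b 1)) (Pi.single a 1)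


/-- double application functional -/
def app2 {n : ℕ} (v w : (Fin n → ℝ) × (Fin n → ℝ)) :
    (((Fin n → ℝ) × (Fin n → ℝ)) →L[ℝ] (((Fin n → ℝ) × (Fin n → ℝ)) →L[ℝ] ℝ)) →L[ℝ] ℝ :=
  (ContinuousLinearMap.apply ℝ ℝ w).comp
    (ContinuousLinearMap.apply ℝ (((Fin n → ℝ) × (Fin n → ℝ)) →L[ℝ] ℝ) v)

/-- C3y -/
lemma pdy_gmet_eq_Theta (hU : IsOpen U) (hL : ContDiffOn ℝ ∞ (Luf L) U) {x y : Fin n → ℝ}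
    (hp : (x, y) ∈ U) (a b c : Fin n) :
    pdy (gmet L a b) c x y
      = Thetaf L (x, y) (0, Pi.single c 1) (0, Pi.single a 1) (0, Pi.single b 1) := by
  have hopen : IsOpen {y' | (x, y') ∈ U} := hU.preimage (continuous_const.prodMk continuous_id)
  have hev : (fun y' => gmet L a b x y') =ᶠ[nhds y]
      (fun y' => (app2 (0, Pi.single a 1) (0, Pi.single b 1)) (Psif L (x, y'))) := by
    filter_upwards [hopen.mem_nhds hp] with y' hy' using gmet_eq_Psi hU hL hy' a b
  have h0 : pdy (gmet L a b) c x y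
      = fderiv ℝ (fun y' => gmet L a b x y') y (Pi.single c 1) := rfl
  rw [h0, hev.fderiv_eq]
  exact fderiv_slice_y_apply (diffAt_of_cdOn hU (hPsi hU hL) hp)
    (app2 (0, Pi.single a 1) (0, Pi.single b 1)) (Pi.single c 1)

/-- C3x -/
lemma pdx_gmet_eq_Theta (hU : IsOpen U) (hL : ContDiffOn ℝ ∞ (Luf L) U) {x y : Fin n → ℝ}
    (hp : (x, y) ∈ U) (a b : Fin n) (μ : Fin n) :
    pdx (gmet L a b) μ x y
      = Thetaf L (x, y) (Pi.single μ 1, 0) (0, Pi.single a 1) (0, Pi.single b 1) := by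
  have hopen : IsOpen {x' | (x', y) ∈ U} := hU.preimage (continuous_id.prodMk continuous_const)
  have hev : (fun x' => gmet L a b x' y) =ᶠ[nhds x]
      (fun x' => (app2 (0, Pi.single a 1) (0, Pi.single b 1)) (Psif L (x', y))) := by
    filter_upwards [hopen.mem_nhds hp] with x' hx' using gmet_eq_Psi hU hL hx' a b
  have h0 : pdx (gmet L a b) μ x y
      = fderiv ℝ (fun x' => gmet L a b x' y) x (Pi.single μ 1) := rfl
  rw [h0, hev.fderiv_eq]
  exact fderiv_slice_x_apply (diffAt_of_cdOn hU (hPsi hU hL) hp)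
    (app2 (0, Pi.single a 1) (0, Pi.single b 1)) (Pi.single μ 1)

/-- symmetry of the second derivative on U -/
lemma Psi_symm (hU : IsOpen U) (hL : ContDiffOn ℝ ∞ (Luf L) U)
    {p : (Fin n → ℝ) × (Fin n → ℝ)} (hp : p ∈ U) (u v : (Fin n → ℝ) × (Fin n → ℝ)) :
    Psif L p u v = Psif L p v u := by
  refine second_derivative_symmetric_of_eventually (f := Luf L) (f' := Phif L) (x := p) ?_ ?_ u v
  · filter_upwards [hU.mem_nhds hp] with q hq using (diffAt_of_cdOn hU hL hq).hasFDerivAt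
  · exact (diffAt_of_cdOn hU (hPhi hU hL) hp).hasFDerivAt

lemma Theta_symm12 (hU : IsOpen U) (hL : ContDiffOn ℝ ∞ (Luf L) U)
    {p : (Fin n → ℝ) × (Fin n → ℝ)} (hp : p ∈ U) (u v w : (Fin n → ℝ) × (Fin n → ℝ)) :
    Thetaf L p u v w = Thetaf L p v u w := by
  have h : Thetaf L p u v = Thetaf L p v u := by
    refine second_derivative_symmetric_of_eventually (f := Phif L) (f' := Psif L) (x := p) ?_ ?_ u v
    · filter_upwards [hU.mem_nhds hp] with q hq using (diffAt_of_cdOn hU (hPhi hU hL) hq).hasFDerivAt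
    · exact (diffAt_of_cdOn hU (hPsi hU hL) hp).hasFDerivAt
  rw [h]

lemma Theta_symm23 (hU : IsOpen U) (hL : ContDiffOn ℝ ∞ (Luf L) U)
    {p : (Fin n → ℝ) × (Fin n → ℝ)} (hp : p ∈ U) (u v w : (Fin n → ℝ) × (Fin n → ℝ)) :
    Thetaf L p u v w = Thetaf L p u w v := by
  have hΨd : DifferentiableAt ℝ (Psif L) p := diffAt_of_cdOn hU (hPsi hU hL) hp
  have hev : (fun q => (app2 v w) (Psif L q)) =ᶠ[nhds p] (fun q => (app2 w v) (Psif L q)) := by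
    filter_upwards [hU.mem_nhds hp] with q hq using Psi_symm hU hL hq v w
  have h1 : Thetaf L p u v w = fderiv ℝ (fun q => (app2 v w) (Psif L q)) p u :=
    (fderiv_clm_apply_const (F' := ((Fin n → ℝ) × (Fin n → ℝ)) →L[ℝ] (((Fin n → ℝ) × (Fin n → ℝ)) →L[ℝ] ℝ)) hΨd (app2 v w) u).symm
  rw [h1, hev.fderiv_eq]
  exact fderiv_clm_apply_const (F' := ((Fin n → ℝ) × (Fin n → ℝ)) →L[ℝ] (((Fin n → ℝ) × (Fin n → ℝ)) →L[ℝ] ℝ)) hΨd (app2 w v) u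


lemma chr_trace_algebra {n : ℕ} (Γ : Fin n → Fin n → ℝ) (P Q : Fin n → Fin n → Fin n → ℝ)
    (N : Fin n → Fin n → ℝ) (t : Fin n → ℝ) (ν : Fin n)
    (hΓ : ∀ a b, Γ a b = Γ b a)
    (hP : ∀ a b c, P a b c = P b a c)
    (hQ : ∀ a b c, Q a b c = Q b a c)
    (hI : ∀ β, (∑ i, ∑ k, Γ i k * Q k i β) = 0) :
    (1:ℝ)/2 * ∑ i, ∑ k, Γ i k * (P k i ν + ∑ β, Q k i β * t β)
      = ∑ μ, (1:ℝ)/2 * (∑ σ, Γ μ σ *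
          ((P σ μ ν - ∑ w, N w ν * Q σ μ w) + (P σ ν μ - ∑ w, N w μ * Q σ ν w)
            - (P ν μ σ - ∑ w, N w σ * Q ν μ w))) := by
  have hcancel : ∑ μ, ∑ σ, Γ μ σ * (P σ ν μ - ∑ w, N w μ * Q σ ν w)
      = ∑ μ, ∑ σ, Γ μ σ * (P ν μ σ - ∑ w, N w σ * Q ν μ w) := by
    rw [Finset.sum_comm]
    refine Finset.sum_congr rfl fun σ _ => Finset.sum_congr rfl fun μ _ => ?_
    rw [hΓ μ σ, hP ν σ μ]; simp only [hQ σ ν]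
  have split : ∑ μ, (1:ℝ)/2 * (∑ σ, Γ μ σ *
          ((P σ μ ν - ∑ w, N w ν * Q σ μ w) + (P σ ν μ - ∑ w, N w μ * Q σ ν w)
            - (P ν μ σ - ∑ w, N w σ * Q ν μ w)))
      = (1:ℝ)/2 * ((∑ μ, ∑ σ, Γ μ σ * (P σ μ ν - ∑ w, N w ν * Q σ μ w))
          + (∑ μ, ∑ σ, Γ μ σ * (P σ ν μ - ∑ w, N w μ * Q σ ν w))
          - (∑ μ, ∑ σ, Γ μ σ * (P ν μ σ - ∑ w, N w σ * Q ν μ w))) := by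
    rw [← Finset.mul_sum]
    congr 1
    rw [← Finset.sum_add_distrib, ← Finset.sum_sub_distrib]
    refine Finset.sum_congr rfl fun μ _ => ?_
    rw [← Finset.sum_add_distrib, ← Finset.sum_sub_distrib]
    exact Finset.sum_congr rfl fun σ _ => by ring
  rw [split, hcancel, add_sub_cancel_right]
  congr 1
  rw [← sub_eq_zero, ← Finset.sum_sub_distrib]
  have inner : ∀ i : Fin n, (∑ k, Γ i k * (P k i ν + ∑ β, Q k i β * t β))
      - (∑ k, Γ i k * (P k i ν - ∑ w, N w ν * Q k i w))
      = ∑ k, ∑ β, (t β + N β ν) * (Γ i k * Q k i β) := by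
    intro i
    rw [← Finset.sum_sub_distrib]
    refine Finset.sum_congr rfl fun k _ => ?_
    have : Γ i k * (P k i ν + ∑ β, Q k i β * t β) - Γ i k * (P k i ν - ∑ w, N w ν * Q k i w)
        = (∑ β, Γ i k * (Q k i β * t β)) + ∑ w, Γ i k * (N w ν * Q k i w) := by
      rw [← Finset.mul_sum, ← Finset.mul_sum]; ring
    rw [this, ← Finset.sum_add_distrib]
    exact Finset.sum_congr rfl fun β _ => by ring
  rw [Finset.sum_congr rfl fun i _ => inner i]
  rw [Finset.sum_congr rfl fun i (_ : i ∈ Finset.univ) =>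
    (Finset.sum_comm : ∑ k, ∑ β, (t β + N β ν) * (Γ i k * Q k i β)
      = ∑ β, ∑ k, (t β + N β ν) * (Γ i k * Q k i β))]
  rw [Finset.sum_comm]
  refine Finset.sum_eq_zero fun β _ => ?_
  have hfac : ∑ i, ∑ k, (t β + N β ν) * (Γ i k * Q k i β)
      = (t β + N β ν) * ∑ i, ∑ k, Γ i k * Q k i β := by
    rw [Finset.mul_sum]
    exact Finset.sum_congr rfl fun i _ => by rw [Finset.mul_sum]
  rw [hfac, hI β, mul_zero]

lemma assemble_algebra {n : ℕ} (ρ : ℝ) (Zv ZX : Fin n → ℝ) (ZY sd N CHR : Fin n → Fin n → ℝ) :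
    ∑ μ, (ρ * (ZX μ + ∑ β, ZY μ β * sd μ β) + Zv μ * (ρ * ∑ k, CHR k μ))
      = ρ * ((∑ μ, ((ZX μ - ∑ ν, N ν μ * ZY μ ν) + ∑ ν, CHR μ ν * Zv ν))
          + ∑ μ, ∑ β, ZY μ β * (sd μ β + N β μ)) := by
  have hswap : ∑ μ, ∑ ν, ρ * (CHR μ ν * Zv ν) = ∑ μ, Zv μ * (ρ * ∑ k, CHR k μ) := by
    rw [Finset.sum_comm]
    refine Finset.sum_congr rfl fun μ _ => ?_
    rw [Finset.mul_sum, Finset.mul_sum]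
    exact Finset.sum_congr rfl fun k _ => by ring
  have hper : ∀ μ : Fin n,
      ρ * (((ZX μ - ∑ ν, N ν μ * ZY μ ν) + ∑ ν, CHR μ ν * Zv ν)
          + ∑ β, ZY μ β * (sd μ β + N β μ))
      = ρ * (ZX μ + ∑ β, ZY μ β * sd μ β) + ∑ ν, ρ * (CHR μ ν * Zv ν) := by
    intro μ
    have f1 : ∑ β, ZY μ β * (sd μ β + N β μ)
        = (∑ β, ZY μ β * sd μ β) + ∑ ν, N ν μ * ZY μ ν := by
      rw [← Finset.sum_add_distrib]
      exact Finset.sum_congr rfl fun β _ => by ring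
    rw [f1, ← Finset.mul_sum]
    ring
  calc ∑ μ, (ρ * (ZX μ + ∑ β, ZY μ β * sd μ β) + Zv μ * (ρ * ∑ k, CHR k μ))
      = ∑ μ, (ρ * (ZX μ + ∑ β, ZY μ β * sd μ β) + ∑ ν, ρ * (CHR μ ν * Zv ν)) := by
        rw [Finset.sum_add_distrib, Finset.sum_add_distrib, hswap]
    _ = ∑ μ, ρ * (((ZX μ - ∑ ν, N ν μ * ZY μ ν) + ∑ ν, CHR μ ν * Zv ν)
          + ∑ β, ZY μ β * (sd μ β + N β μ)) :=
        Finset.sum_congr rfl fun μ _ => (hper μ).symm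
    _ = ρ * ∑ μ, (((ZX μ - ∑ ν, N ν μ * ZY μ ν) + ∑ ν, CHR μ ν * Zv ν)
          + ∑ β, ZY μ β * (sd μ β + N β μ)) := (Finset.mul_sum _ _ _).symm
    _ = ρ * ((∑ μ, ((ZX μ - ∑ ν, N ν μ * ZY μ ν) + ∑ ν, CHR μ ν * Zv ν))
          + ∑ μ, ∑ β, ZY μ β * (sd μ β + N β μ)) := by rw [Finset.sum_add_distrib]


lemma pd_mul {n : ℕ} {f g : (Fin n → ℝ) → ℝ} {x : Fin n → ℝ} {f' g' : (Fin n → ℝ) →L[ℝ] ℝ}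
    (hf : HasFDerivAt f f' x) (hg : HasFDerivAt g g' x) (μ : Fin n) :
    pd (fun t => f t * g t) μ x = f x * pd g μ x + g x * pd f μ x := by
  rw [pd, (hf.fun_mul hg).fderiv, pd, hg.fderiv, pd, hf.fderiv]
  simp [smul_eq_mul]
/-- (Pointwise form of the genuinely Finslerian divergence theorem.)
If the mean Cartan torsion vanishes identically, then with `ρ(x) = √|det g(x,s(x))|`,
`∂_μ[ρ Z^μ(x,s(x))] = ρ ((∇^H·Z)(x,s(x)) + (∂Z^μ/∂y^β)(x,s(x)) D_μ s^β)`. -/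
theorem finslerian_divergence_pointwise
    {n : ℕ} (hn : 2 ≤ n) (Ω : Set (Fin n → ℝ)) (hΩopen : IsOpen Ω) (hΩconn : IsConnected Ω)
    (L : (Fin n → ℝ) → (Fin n → ℝ) → ℝ)
    (hL : ContDiffOn ℝ (⊤ : ℕ∞) (fun p : (Fin n → ℝ) × (Fin n → ℝ) => L p.1 p.2)
      (Ω ×ˢ {y : Fin n → ℝ | y ≠ 0}))
    (hhom : ∀ x ∈ Ω, ∀ y : Fin n → ℝ, y ≠ 0 → ∀ t : ℝ, 0 < t → L x (t • y) = t ^ 2 * L x y)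
    (ginv : Fin n → Fin n → (Fin n → ℝ) → (Fin n → ℝ) → ℝ)
    (hginv : ∀ x ∈ Ω, ∀ y : Fin n → ℝ, y ≠ 0 → ∀ μ ν : Fin n,
      (∑ σ, gmet L μ σ x y * ginv σ ν x y) = if μ = ν then (1 : ℝ) else 0)
    (hI : ∀ x ∈ Ω, ∀ y : Fin n → ℝ, y ≠ 0 → ∀ γ : Fin n, meanCartan L ginv γ x y = 0)
    (Z : (Fin n → ℝ) → (Fin n → ℝ) → (Fin n → ℝ))
    (hZ : ContDiffOn ℝ (⊤ : ℕ∞) (fun p : (Fin n → ℝ) × (Fin n → ℝ) => Z p.1 p.2)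
      (Ω ×ˢ {y : Fin n → ℝ | y ≠ 0}))
    (s : (Fin n → ℝ) → (Fin n → ℝ)) (hs : ContDiffOn ℝ (⊤ : ℕ∞) s Ω) (hs0 : ∀ x ∈ Ω, s x ≠ 0)
    :
    ∀ x ∈ Ω,
      (∑ μ, pd (fun x' =>
          Real.sqrt |(Matrix.of fun a b => gmet L a b x' (s x')).det| * Z x' (s x') μ) μ x) =
        Real.sqrt |(Matrix.of fun a b => gmet L a b x (s x)).det| *
          ((∑ μ, hcov L ginv Z μ μ x (s x))
            + ∑ μ, ∑ β, pdy (fun x y => Z x y μ) β x (s x) * Dsec L ginv s μ β x) := by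
  intro x hx
  have hy0 : s x ≠ 0 := hs0 x hx
  have hU : IsOpen (Ω ×ˢ {y : Fin n → ℝ | y ≠ 0}) := hΩopen.prod isOpen_ne
  have hpU : (x, s x) ∈ Ω ×ˢ {y : Fin n → ℝ | y ≠ 0} := ⟨hx, hy0⟩
  have hLs : ContDiffOn ℝ ∞ (Luf L) (Ω ×ˢ {y : Fin n → ℝ | y ≠ 0}) := hL.of_le (by simp)
  have hZs : ContDiffOn ℝ ∞ (fun p : (Fin n → ℝ) × (Fin n → ℝ) => Z p.1 p.2)
      (Ω ×ˢ {y : Fin n → ℝ | y ≠ 0}) := hZ.of_le (by simp)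
  have hss : ContDiffOn ℝ ∞ s Ω := hs.of_le (by simp)
  have hsd : DifferentiableAt ℝ s x :=
    (hss.differentiableOn (by simp)).differentiableAt (hΩopen.mem_nhds hx)
  -- symmetries of the metric and its derivatives at (x, s x)
  have hGsym : ∀ a b : Fin n, gmet L a b x (s x) = gmet L b a x (s x) := fun a b => by
    rw [gmet_eq_Psi hU hLs hpU, gmet_eq_Psi hU hLs hpU, Psi_symm hU hLs hpU]
  have hGXsym : ∀ a b ν : Fin n, pdx (gmet L a b) ν x (s x) = pdx (gmet L b a) ν x (s x) :=
    fun a b ν => by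
      rw [pdx_gmet_eq_Theta hU hLs hpU, pdx_gmet_eq_Theta hU hLs hpU,
        Theta_symm23 hU hLs hpU]
  have hGYsym : ∀ a b c : Fin n, pdy (gmet L a b) c x (s x) = pdy (gmet L b a) c x (s x) :=
    fun a b c => by
      rw [pdy_gmet_eq_Theta hU hLs hpU, pdy_gmet_eq_Theta hU hLs hpU,
        Theta_symm23 hU hLs hpU]
  have hGYswap : ∀ a b c : Fin n, pdy (gmet L a b) c x (s x) = pdy (gmet L a c) b x (s x) :=
    fun a b c => by
      rw [pdy_gmet_eq_Theta hU hLs hpU, pdy_gmet_eq_Theta hU hLs hpU,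
        Theta_symm12 hU hLs hpU, Theta_symm23 hU hLs hpU, Theta_symm12 hU hLs hpU]
  -- matrix facts at the point
  set Gm : Matrix (Fin n) (Fin n) ℝ := Matrix.of (fun a b => gmet L a b x (s x)) with hGmdef
  set Γm : Matrix (Fin n) (Fin n) ℝ := Matrix.of (fun a b => ginv a b x (s x)) with hΓmdef
  have hmulm : Gm * Γm = 1 := by
    ext i j
    rw [Matrix.mul_apply, Matrix.one_apply]
    simpa [hGmdef, hΓmdef] using hginv x hx (s x) hy0 i j
  have hdet0 : Gm.det ≠ 0 := by
    intro h0
    have h1 := congrArg Matrix.det hmulm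
    rw [Matrix.det_mul, h0, zero_mul, Matrix.det_one] at h1
    exact zero_ne_one h1
  have hΓGinv : Γm = Gm⁻¹ := (Matrix.inv_eq_right_inv hmulm).symm
  have hΓsym : ∀ a b : Fin n, ginv a b x (s x) = ginv b a x (s x) := by
    have hGt : Gm.transpose = Gm := by
      ext i j
      simp only [Matrix.transpose_apply, hGmdef, Matrix.of_apply]
      exact hGsym j i
    have hto : Γm.transpose = Γm := by
      rw [hΓGinv, Matrix.transpose_nonsing_inv, hGt]
    intro a b
    have h2 : Γm.transpose a b = Γm a b := by rw [hto]
    simpa [Matrix.transpose_apply, hΓmdef, Matrix.of_apply] using h2.symm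
  have hadj : ∀ i k : Fin n, Gm.adjugate i k = Gm.det * ginv i k x (s x) := by
    have h1 : Gm.adjugate = Gm.det • Γm := by
      calc Gm.adjugate = 1 * Gm.adjugate := (one_mul _).symm
        _ = Γm * Gm * Gm.adjugate := by rw [mul_eq_one_comm.mp hmulm]
        _ = Γm * (Gm * Gm.adjugate) := by rw [mul_assoc]
        _ = Γm * (Gm.det • 1) := by rw [Matrix.mul_adjugate]
        _ = Gm.det • Γm := by rw [Matrix.mul_smul, mul_one]
    intro i k
    have h2 := congrFun (congrFun h1 i) k
    simpa [Matrix.smul_apply, hΓmdef, Matrix.of_apply, smul_eq_mul] using h2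
  -- chain rule for the metric entries along the section
  have hgF : ∀ a b : Fin n, ∀ p ∈ (Ω ×ˢ {y : Fin n → ℝ | y ≠ 0}), gmet L a b p.1 p.2
      = (fun q => (app2 ((0 : Fin n → ℝ), Pi.single a 1) ((0 : Fin n → ℝ), Pi.single b 1))
          (Psif L q)) p :=
    fun a b p hp => gmet_eq_Psi hU hLs hp a b
  have hFdiffg : ∀ a b : Fin n, DifferentiableAt ℝ
      (fun q => (app2 ((0 : Fin n → ℝ), Pi.single a 1) ((0 : Fin n → ℝ), Pi.single b 1))
        (Psif L q)) (x, s x) :=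
    fun a b => by
      simpa [Function.comp_def] using
        ((app2 ((0 : Fin n → ℝ), Pi.single a 1)
          ((0 : Fin n → ℝ), Pi.single b 1)).differentiableAt).comp (x, s x)
          (diffAt_of_cdOn hU (hPsi hU hLs) hpU)
  have hGcomp : ∀ a b : Fin n, DifferentiableAt ℝ (fun x' => gmet L a b x' (s x')) x :=
    fun a b => (comp_section_hasFDerivAt hU (hgF a b) hpU (hFdiffg a b) hsd).differentiableAt
  have hGent : ∀ a b : Fin n, HasFDerivAt (fun x' => gmet L a b x' (s x'))
      (fderiv ℝ (fun x' => gmet L a b x' (s x')) x) x := fun a b => (hGcomp a b).hasFDerivAt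
  have hGpd : ∀ a b ν : Fin n, pd (fun x' => gmet L a b x' (s x')) ν x
      = pdx (gmet L a b) ν x (s x)
        + ∑ β, pdy (gmet L a b) β x (s x) * pd (fun x' => s x' β) ν x :=
    fun a b ν => comp_section_pd hU (hgF a b) hpU (hFdiffg a b) hsd ν
  have hDgval : ∀ a b ν : Fin n, fderiv ℝ (fun x' => gmet L a b x' (s x')) x (Pi.single ν 1)
      = pdx (gmet L a b) ν x (s x)
        + ∑ β, pdy (gmet L a b) β x (s x) * pd (fun x' => s x' β) ν x :=
    fun a b ν => hGpd a b ν
  -- chain rule for Z along the section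
  have hZF : ∀ μ : Fin n, ∀ p ∈ Ω ×ˢ {y : Fin n → ℝ | y ≠ 0},
      (fun x y => Z x y μ) p.1 p.2 = (fun q : (Fin n → ℝ) × (Fin n → ℝ) => Z q.1 q.2 μ) p :=
    fun _ _ _ => rfl
  have hZdiff : ∀ μ : Fin n, DifferentiableAt ℝ
      (fun q : (Fin n → ℝ) × (Fin n → ℝ) => Z q.1 q.2 μ) (x, s x) :=
    fun μ => by
      simpa [Function.comp_def] using
        ((ContinuousLinearMap.proj (R := ℝ) (φ := fun _ : Fin n => ℝ) μ).differentiableAt).comp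
          (x, s x) (diffAt_of_cdOn hU hZs hpU)
  have hZcomp : ∀ μ : Fin n, DifferentiableAt ℝ (fun x' => Z x' (s x') μ) x :=
    fun μ => by
      exact (comp_section_hasFDerivAt (f := fun x y => Z x y μ) hU (hZF μ) hpU
        (hZdiff μ) hsd).differentiableAt
  have hZent : ∀ μ : Fin n, HasFDerivAt (fun x' => Z x' (s x') μ)
      (fderiv ℝ (fun x' => Z x' (s x') μ) x) x := fun μ => (hZcomp μ).hasFDerivAt
  have hZpd : ∀ μ ν : Fin n, pd (fun x' => Z x' (s x') μ) ν x
      = pdx (fun x y => Z x y μ) ν x (s x)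
        + ∑ β, pdy (fun x y => Z x y μ) β x (s x) * pd (fun x' => s x' β) ν x :=
    fun μ ν => comp_section_pd (f := fun x y => Z x y μ) hU (hZF μ) hpU (hZdiff μ) hsd ν
  -- Jacobi's formula
  obtain ⟨J, hdetJ, hJval⟩ : ∃ J : (Fin n → ℝ) →L[ℝ] ℝ,
      HasFDerivAt (fun t =>
        ((Matrix.of fun a b => gmet L a b t (s t)) : Matrix (Fin n) (Fin n) ℝ).det) J x ∧
      ∀ ν : Fin n, J (Pi.single ν 1) = ∑ i, ∑ k, Gm.det * ginv i k x (s x) *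
        (pdx (gmet L k i) ν x (s x)
          + ∑ β, pdy (gmet L k i) β x (s x) * pd (fun x' => s x' β) ν x) := by
    refine ⟨_, jacobi_hasFDerivAt (fun t => Matrix.of fun a b => gmet L a b t (s t))
      (fun a b => fderiv ℝ (fun x' => gmet L a b x' (s x')) x) (fun i j => hGent i j), ?_⟩
    intro ν
    refine (jacobi_apply (fun t => Matrix.of fun a b => gmet L a b t (s t))
      (fun a b => fderiv ℝ (fun x' => gmet L a b x' (s x')) x) x (Pi.single ν 1)).trans ?_
    refine Finset.sum_congr rfl fun i _ => Finset.sum_congr rfl fun k _ => ?_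
    beta_reduce
    rw [← hGmdef, hadj i k, hDgval k i ν]
  -- derivative of ρ
  have hρ : HasFDerivAt
      (fun x' => Real.sqrt |(Matrix.of fun a b => gmet L a b x' (s x')).det|)
      ((Real.sqrt |Gm.det| / (2 * Gm.det)) • J) x := by
    have h0 : ((Matrix.of fun a b => gmet L a b x (s x)) : Matrix (Fin n) (Fin n) ℝ).det ≠ 0 := by
      rw [← hGmdef]; exact hdet0
    have h1 := hasFDerivAt_sqrt_abs
      (fun t => ((Matrix.of fun a b => gmet L a b t (s t)) : Matrix (Fin n) (Fin n) ℝ).det)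
      hdetJ h0
    rw [hGmdef]
    exact h1
  have hpdρ : ∀ μ : Fin n,
      pd (fun x' => Real.sqrt |(Matrix.of fun a b => gmet L a b x' (s x')).det|) μ x
      = Real.sqrt |Gm.det| / (2 * Gm.det) * J (Pi.single μ 1) := by
    intro μ
    rw [pd, hρ.fderiv, ContinuousLinearMap.smul_apply, smul_eq_mul]
  -- vanishing mean Cartan torsion in the needed form
  have hI' : ∀ β : Fin n, (∑ i, ∑ k, ginv i k x (s x) * pdy (gmet L k i) β x (s x)) = 0 := by
    intro β
    have hIb : (∑ α : Fin n, ∑ b : Fin n, ginv α b x (s x)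
        * (1 / 2 * pdy (gmet L b β) α x (s x))) = 0 := hI x hx (s x) hy0 β
    have h3 : (∑ i, ∑ k, ginv i k x (s x) * pdy (gmet L k i) β x (s x))
        = 2 * ∑ i, ∑ k, ginv i k x (s x) * (1 / 2 * pdy (gmet L k β) i x (s x)) := by
      rw [Finset.mul_sum]
      refine Finset.sum_congr rfl fun i _ => ?_
      rw [Finset.mul_sum]
      refine Finset.sum_congr rfl fun k _ => ?_
      rw [hGYswap k i β]
      ring
    rw [h3, hIb, mul_zero]
  -- the Christoffel trace
  have hCT : ∀ ν : Fin n, (1:ℝ)/2 * ∑ i, ∑ k, ginv i k x (s x) *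
      (pdx (gmet L k i) ν x (s x)
        + ∑ β, pdy (gmet L k i) β x (s x) * pd (fun x' => s x' β) ν x)
      = ∑ μ, chr L ginv μ ν μ x (s x) := by
    intro ν
    rw [chr_trace_algebra (fun a b => ginv a b x (s x))
      (fun a b c => pdx (gmet L a b) c x (s x))
      (fun a b c => pdy (gmet L a b) c x (s x))
      (fun w c => nlc L ginv w c x (s x))
      (fun β => pd (fun x' => s x' β) ν x) ν hΓsym hGXsym hGYsym hI']
    exact Finset.sum_congr rfl fun μ _ => rfl
  -- factor out the determinant
  have hFactor : ∀ ν : Fin n, Real.sqrt |Gm.det| / (2 * Gm.det) *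
      (∑ i, ∑ k, Gm.det * ginv i k x (s x) *
        (pdx (gmet L k i) ν x (s x)
          + ∑ β, pdy (gmet L k i) β x (s x) * pd (fun x' => s x' β) ν x))
      = Real.sqrt |Gm.det| * ((1:ℝ)/2 * ∑ i, ∑ k, ginv i k x (s x) *
        (pdx (gmet L k i) ν x (s x)
          + ∑ β, pdy (gmet L k i) β x (s x) * pd (fun x' => s x' β) ν x)) := by
    intro ν
    have hpull : (∑ i, ∑ k, Gm.det * ginv i k x (s x) *
        (pdx (gmet L k i) ν x (s x)
          + ∑ β, pdy (gmet L k i) β x (s x) * pd (fun x' => s x' β) ν x))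
        = Gm.det * ∑ i, ∑ k, ginv i k x (s x) *
        (pdx (gmet L k i) ν x (s x)
          + ∑ β, pdy (gmet L k i) β x (s x) * pd (fun x' => s x' β) ν x) := by
      rw [Finset.mul_sum]
      refine Finset.sum_congr rfl fun i _ => ?_
      rw [Finset.mul_sum]
      exact Finset.sum_congr rfl fun k _ => by ring
    rw [hpull]
    field_simp
  -- value of each summand on the left-hand side
  have hLHSμ : ∀ μ : Fin n,
      pd (fun x' => Real.sqrt |(Matrix.of fun a b => gmet L a b x' (s x')).det|
        * Z x' (s x') μ) μ x
      = Real.sqrt |Gm.det| * (pdx (fun x y => Z x y μ) μ x (s x)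
          + ∑ β, pdy (fun x y => Z x y μ) β x (s x) * pd (fun x' => s x' β) μ x)
        + Z x (s x) μ * (Real.sqrt |Gm.det| * ∑ k, chr L ginv k μ k x (s x)) := by
    intro μ
    rw [pd_mul hρ (hZent μ) μ, hZpd μ μ, hpdρ μ, hJval μ, hFactor μ, hCT μ, ← hGmdef]
  -- assemble
  rw [Finset.sum_congr rfl fun μ _ => hLHSμ μ]
  rw [assemble_algebra (Real.sqrt |Gm.det|) (fun μ => Z x (s x) μ)
    (fun μ => pdx (fun x y => Z x y μ) μ x (s x))
    (fun μ β => pdy (fun x y => Z x y μ) β x (s x))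
    (fun μ β => pd (fun x' => s x' β) μ x)
    (fun a c => nlc L ginv a c x (s x))
    (fun μ ν => chr L ginv μ ν μ x (s x))]
  rfl
end ladder
end
end
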